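/- arXiv:1508.03299 — 5 statements merged into one kernel-verified Lean document; each statement's English description precedes it below -/
import Mathlib

section
/- If F is a face of a convex set C, then F equals the intersection of the affine hull of F with C. -/
/-- A face of a convex set `C`. -/
def IsFace {V : Type*} [AddCommGroup V] [Module ℝ V] (C F : Set V) : Prop :=
  F.Nonempty ∧ F ⊆ C ∧ Convex ℝ F ∧
    ∀ v ∈ C, ∀ w ∈ C, ∀ p : ℝ, 0 < p → p < 1 → p • v + (1 - p) • w ∈ F → v ∈ F ∧ w ∈ F

/-!
For a nonempty convex `F`, the vectors `t • (a - b)` with `a, b ∈ F` and `t > 0` already fill the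
vector span of `F`: by convexity, `t • (a - b) + t' • (a' - b')` is again of this form. So a point
`x ∈ aff F ∩ C` satisfies `x - u = t • (a - b)` with `u, a, b ∈ F`, i.e.
`(u + t • a) / (1 + t) = (x + t • b) / (1 + t)`. The left side lies in `F` and the right side is a
proper convex combination of points of `C`, so the face property puts `x` in `F`.
-/

section

variable {V : Type*} [AddCommGroup V] [Module ℝ V]

lemma Convex.exists_eq_smul_sub_of_mem_vectorSpan {F : Set V} (hF : Convex ℝ F)
    (hne : F.Nonempty) {w : V} (hw : w ∈ vectorSpan ℝ F) :
    ∃ a ∈ F, ∃ b ∈ F, ∃ t : ℝ, 0 < t ∧ w = t • (a - b) := by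
  rw [vectorSpan_def] at hw
  induction hw using Submodule.span_induction with
  | mem w hw =>
    obtain ⟨a, ha, b, hb, rfl⟩ := hw
    exact ⟨a, ha, b, hb, 1, one_pos, (vsub_eq_sub a b).trans (one_smul ℝ _).symm⟩
  | zero =>
    obtain ⟨a, ha⟩ := hne
    exact ⟨a, ha, a, ha, 1, one_pos, by rw [sub_self, smul_zero]⟩
  | add w w' _ _ ih ih' =>
    obtain ⟨a, ha, b, hb, t, ht, rfl⟩ := ih
    obtain ⟨a', ha', b', hb', t', ht', rfl⟩ := ih'
    have hr : 0 < t + t' := add_pos ht ht'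
    have hsum : t / (t + t') + t' / (t + t') = 1 := by field_simp
    refine ⟨(t / (t + t')) • a + (t' / (t + t')) • a',
      hF ha ha' (by positivity) (by positivity) hsum,
      (t / (t + t')) • b + (t' / (t + t')) • b',
      hF hb hb' (by positivity) (by positivity) hsum, t + t', hr, ?_⟩
    simp only [smul_sub, smul_add, smul_smul, mul_div_cancel₀ _ hr.ne']
    abel
  | smul c w _ ih =>
    obtain ⟨a, ha, b, hb, t, ht, rfl⟩ := ih
    rcases lt_trichotomy c 0 with hc | rfl | hc
    · exact ⟨b, hb, a, ha, -c * t, mul_pos (neg_pos.2 hc) ht, by rw [smul_smul]; module⟩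
    · exact ⟨a, ha, a, ha, 1, one_pos, by rw [zero_smul, sub_self, smul_zero]⟩
    · exact ⟨a, ha, b, hb, c * t, mul_pos hc ht, by rw [smul_smul]⟩

lemma IsFace.mem_of_add_smul_eq_add_smul {C F : Set V} (hF : IsFace C F) {u a x b : V}
    (hu : u ∈ F) (ha : a ∈ F) (hx : x ∈ C) (hb : b ∈ C) {t : ℝ} (ht : 0 < t)
    (h : u + t • a = x + t • b) : x ∈ F := by
  obtain ⟨-, -, hconv, hface⟩ := hF
  obtain ⟨p, hp, hpt, hp1⟩ : ∃ p : ℝ, 0 < p ∧ p * t = 1 - p ∧ p < 1 :=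
    ⟨(1 + t)⁻¹, by positivity, by field_simp; ring, inv_lt_one_of_one_lt₀ (by linarith)⟩
  have hcomb : p • u + (1 - p) • a = p • x + (1 - p) • b := by
    rw [← hpt, ← smul_smul, ← smul_smul, ← smul_add, ← smul_add, h]
  have hmem : p • u + (1 - p) • a ∈ F :=
    hconv hu ha hp.le (by rw [← hpt]; positivity) (add_sub_cancel p 1)
  exact (hface x hx b hb p hp hp1 (hcomb ▸ hmem)).1

end

theorem face_eq_affineSpan_inter_general {V : Type*} [AddCommGroup V] [Module ℝ V]
    {C F : Set V} (hF : IsFace C F) :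
    F = (affineSpan ℝ F : Set V) ∩ C := by
  have ⟨⟨u, hu⟩, hFC, hconv, _⟩ := hF
  refine (Set.subset_inter (subset_affineSpan ℝ F) hFC).antisymm ?_
  rintro x ⟨hxA, hxC⟩
  have hdir : x - u ∈ vectorSpan ℝ F := by
    rw [← direction_affineSpan, ← vsub_eq_sub]
    exact AffineSubspace.vsub_mem_direction hxA (subset_affineSpan ℝ F hu)
  obtain ⟨a, ha, b, hb, t, ht, hxu⟩ := hconv.exists_eq_smul_sub_of_mem_vectorSpan ⟨u, hu⟩ hdir
  refine hF.mem_of_add_smul_eq_add_smul hu ha hxC (hFC hb) ht ?_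
  rw [smul_sub, sub_eq_iff_eq_add] at hxu
  rw [hxu]
  abel

/-- If `F` is a face of a convex set `C`, then `F` equals the intersection of the
affine hull of `F` with `C`. -/
theorem face_eq_affineSpan_inter {V : Type*} [AddCommGroup V] [Module ℝ V]
    {C F : Set V} (hC : Convex ℝ C) (hF : IsFace C F) :
    F = (affineSpan ℝ F : Set V) ∩ C :=
  face_eq_affineSpan_inter_general hF
end

section
/- Suppose the self-dualizing inner product ⟨·,·⟩ satisfies: ⟨a,b⟩ ≥ 0 for all states, ⟨w,w⟩ = 1 for pure states, maximal frames sum to the order unit (so for maximal frames {w_j}, {w'_i}: ∑_j ⟨w'_i, w_j⟩ = 1 and ∑_i ⟨w'_i, w_j⟩ = 1), and frame elements are orthonormal. If a state w has two decompositions w = ∑_j p_j w_j = ∑_i q_i w'_i into maximal frames with probability coefficients, then the probability vector q is a permutation of p; consequently the entropy −∑ p_j ln p_j is well-defined, independent of the classical decomposition. -/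
open scoped RealInnerProductSpace

/-!
Let `R` be the matrix of inner products `⟪w2 i, w1 j⟫`. Orthonormality turns the two
decompositions of `w` into `q = R p` and `p = Rᵀ q`. For doubly stochastic `R` these two relations
force `∑ i j, R i j * (p j - q i) ^ 2 = 0`, so `q i = p j` wherever `R i j ≠ 0`. By Birkhoff's
theorem the support of `R` contains the graph of a permutation, which therefore carries `p` to `q`.
-/

open Finset Matrix

section DoublyStochastic

variable {R n : Type*} [Fintype n] [DecidableEq n]

section CommRing

variable [CommRing R] [LinearOrder R] [IsStrictOrderedRing R] {M : Matrix n n R} {p q : n → R}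

lemma eq_of_ne_zero_of_mulVec_eq_of_vecMul_eq (hM : M ∈ doublyStochastic R n)
    (hq : M *ᵥ p = q) (hp : q ᵥ* M = p) {i j : n} (hij : M i j ≠ 0) : q i = p j := by
  have hrow : ∀ i, ∑ j, M i j * (p j - q i) = 0 := fun i => by
    simp [mul_sub, ← sum_mul, sum_row_of_mem_doublyStochastic hM, ← hq, mulVec, dotProduct]
  have hcol : ∀ j, ∑ i, M i j * (p j - q i) = 0 := fun j => by
    simp [mul_sub, ← sum_mul, sum_col_of_mem_doublyStochastic hM, ← hp, vecMul, dotProduct,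
      mul_comm]
  have hzero : ∑ i, ∑ j, M i j * (p j - q i) ^ 2 = 0 :=
    calc ∑ i, ∑ j, M i j * (p j - q i) ^ 2
        = ∑ i, ∑ j, (p j * (M i j * (p j - q i)) - q i * (M i j * (p j - q i))) :=
          sum_congr rfl fun i _ => sum_congr rfl fun j _ => by ring
      _ = ∑ j, p j * ∑ i, M i j * (p j - q i) - ∑ i, q i * ∑ j, M i j * (p j - q i) := by
          simp only [sum_sub_distrib, mul_sum]
          rw [sum_comm]
      _ = 0 := by simp [hrow, hcol]
  have hterm_nonneg : ∀ i j, 0 ≤ M i j * (p j - q i) ^ 2 := fun i j =>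
    mul_nonneg (nonneg_of_mem_doublyStochastic hM) (sq_nonneg _)
  have hrow_zero := (sum_eq_zero_iff_of_nonneg fun i _ => sum_nonneg fun j _ =>
    hterm_nonneg i j).1 hzero i (mem_univ i)
  have hterm_zero := (sum_eq_zero_iff_of_nonneg fun j _ => hterm_nonneg i j).1 hrow_zero j
    (mem_univ j)
  have hsq_zero := (mul_eq_zero.1 hterm_zero).resolve_left hij
  linear_combination -(pow_eq_zero_iff two_ne_zero).1 hsq_zero

end CommRing

section Field

variable [Field R] [LinearOrder R] [IsStrictOrderedRing R] {M : Matrix n n R}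

lemma exists_perm_forall_pos_of_mem_doublyStochastic (hM : M ∈ doublyStochastic R n) :
    ∃ σ : Equiv.Perm n, ∀ i, 0 < M i (σ i) := by
  obtain ⟨w, hw_nonneg, hw_sum, rfl⟩ := exists_eq_sum_perm_of_mem_doublyStochastic hM
  obtain ⟨σ, -, hσ⟩ := exists_lt_of_sum_lt (s := univ) (f := 0) (g := w) (by simp [hw_sum])
  refine ⟨σ, fun i => ?_⟩
  calc (0 : R) < w σ • σ.permMatrix R i (σ i) := by simpa [Equiv.toPEquiv_apply] using hσ
    _ ≤ ∑ τ, w τ • τ.permMatrix R i (σ i) :=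
      single_le_sum (f := fun τ : Equiv.Perm n => w τ • τ.permMatrix R i (σ i))
        (fun τ _ => smul_nonneg (hw_nonneg τ)
          (nonneg_of_mem_doublyStochastic permMatrix_mem_doublyStochastic))
        (mem_univ σ)
    _ = (∑ τ, w τ • τ.permMatrix R) i (σ i) := by simp [Matrix.sum_apply]

lemma exists_perm_eq_comp_of_mulVec_eq_of_vecMul_eq {p q : n → R}
    (hM : M ∈ doublyStochastic R n) (hq : M *ᵥ p = q) (hp : q ᵥ* M = p) :
    ∃ σ : Equiv.Perm n, ∀ i, q i = p (σ i) := by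
  obtain ⟨σ, hσ⟩ := exists_perm_forall_pos_of_mem_doublyStochastic hM
  exact ⟨σ, fun i => eq_of_ne_zero_of_mulVec_eq_of_vecMul_eq hM hq hp (hσ i).ne'⟩

end Field

end DoublyStochastic

section InnerMatrix

variable {E ι κ : Type*} [NormedAddCommGroup E] [InnerProductSpace ℝ E] [Fintype ι] [Fintype κ]
  {v : ι → E} {u : κ → E} {a : κ → ℝ} {b : ι → ℝ}

lemma Orthonormal.inner_mulVec_eq_of_sum_smul_eq (hv : Orthonormal ℝ v)
    (h : ∑ j, a j • u j = ∑ i, b i • v i) : Matrix.of (fun i j => ⟪v i, u j⟫) *ᵥ a = b := by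
  ext i
  rw [← hv.inner_right_fintype b i, ← h]
  simp [inner_sum, real_inner_smul_right, mulVec, dotProduct, mul_comm]

lemma Orthonormal.vecMul_inner_eq_of_sum_smul_eq (hu : Orthonormal ℝ u)
    (h : ∑ j, a j • u j = ∑ i, b i • v i) : b ᵥ* Matrix.of (fun i j => ⟪v i, u j⟫) = a := by
  rw [← hu.inner_mulVec_eq_of_sum_smul_eq h.symm, ← mulVec_transpose]
  congr 1
  ext j i
  exact real_inner_comm _ _

end InnerMatrix

theorem entropy_well_defined_general {A : Type*} [NormedAddCommGroup A] [InnerProductSpace ℝ A]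
    {n : ℕ} (w : A) (w1 w2 : Fin n → A)
    (h1 : Orthonormal ℝ w1) (h2 : Orthonormal ℝ w2)
    (hnn : ∀ i j, 0 ≤ ⟪w2 i, w1 j⟫)
    (hrow : ∀ i, ∑ j, ⟪w2 i, w1 j⟫ = 1) (hcol : ∀ j, ∑ i, ⟪w2 i, w1 j⟫ = 1)
    (p q : Fin n → ℝ)
    (hdp : w = ∑ j, p j • w1 j) (hdq : w = ∑ i, q i • w2 i) :
    ∃ σ : Equiv.Perm (Fin n), (∀ i, q i = p (σ i)) ∧
      ∑ i, Real.negMulLog (q i) = ∑ j, Real.negMulLog (p j) := by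
  have hM : Matrix.of (fun i j => ⟪w2 i, w1 j⟫) ∈ doublyStochastic ℝ (Fin n) :=
    mem_doublyStochastic_iff_sum.2 ⟨hnn, hrow, hcol⟩
  have hdecomp : ∑ j, p j • w1 j = ∑ i, q i • w2 i := hdp.symm.trans hdq
  obtain ⟨σ, hσ⟩ := exists_perm_eq_comp_of_mulVec_eq_of_vecMul_eq hM
    (h2.inner_mulVec_eq_of_sum_smul_eq hdecomp) (h1.vecMul_inner_eq_of_sum_smul_eq hdecomp)
  refine ⟨σ, hσ, ?_⟩
  simp only [hσ]
  exact Equiv.sum_comp σ (Real.negMulLog ∘ p)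

/-- Well-definedness of the thermodynamic entropy: if a state has two decompositions into
maximal frames (orthonormal families of unit vectors with nonnegative pairwise inner
products whose Gram matrix is doubly stochastic) with probability coefficients `p` and
`q`, then `q` is a permutation of `p`, and hence the entropy `−∑ p_j ln p_j` does not
depend on the choice of classical decomposition. -/
theorem entropy_well_defined {A : Type*} [NormedAddCommGroup A] [InnerProductSpace ℝ A]
    [FiniteDimensional ℝ A] {n : ℕ} (w : A) (w1 w2 : Fin n → A)
    (h1 : Orthonormal ℝ w1) (h2 : Orthonormal ℝ w2)
    (hnn : ∀ i j, 0 ≤ ⟪w2 i, w1 j⟫)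
    (hrow : ∀ i, ∑ j, ⟪w2 i, w1 j⟫ = 1) (hcol : ∀ j, ∑ i, ⟪w2 i, w1 j⟫ = 1)
    (p q : Fin n → ℝ) (hp : ∀ j, 0 ≤ p j) (hps : ∑ j, p j = 1)
    (hq : ∀ i, 0 ≤ q i) (hqs : ∑ i, q i = 1)
    (hdp : w = ∑ j, p j • w1 j) (hdq : w = ∑ i, q i • w2 i) :
    ∃ σ : Equiv.Perm (Fin n), (∀ i, q i = p (σ i)) ∧
      ∑ i, Real.negMulLog (q i) = ∑ j, Real.negMulLog (p j) :=
  entropy_well_defined_general w w1 w2 h1 h2 hnn hrow hcol p q hdp hdq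
end

section
/- Let P_1,...,P_n be symmetric positive projectors on a self-dual state space forming an operation (∑_j u_A ∘ P_j = u_A, each P_j positive on A_+). Then the projectors are mutually orthogonal: P_k P_j = 0 for k ≠ j. -/
open scoped RealInnerProductSpace

/-- On a self-dual state space, symmetric positive projectors forming an operation
(`∑_j u_A ∘ P_j = u_A`) are mutually orthogonal: `P_k P_j = 0` for `k ≠ j`. -/
theorem projectors_mutually_orthogonal {A : Type*} [NormedAddCommGroup A]
    [InnerProductSpace ℝ A] [FiniteDimensional ℝ A]
    (K : Set A)
    (hKnn : ∀ v ∈ K, ∀ w ∈ K, 0 ≤ ⟪v, w⟫)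
    (hKsd : K = {w : A | ∀ v ∈ K, 0 ≤ ⟪w, v⟫})
    (hKspan : Submodule.span ℝ K = ⊤)
    (u : A →ₗ[ℝ] ℝ) (hu : ∀ x ∈ K, x ≠ 0 → 0 < u x)
    {n : ℕ} (P : Fin n → (A →ₗ[ℝ] A))
    (hproj : ∀ j, (P j) ∘ₗ (P j) = P j)
    (hsymm : ∀ j, ∀ x y : A, ⟪P j x, y⟫ = ⟪x, P j y⟫)
    (hpos : ∀ j, ∀ x ∈ K, P j x ∈ K)
    (hop : ∀ x : A, ∑ j, u (P j x) = u x) :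
    ∀ j k, j ≠ k → (P k) ∘ₗ (P j) = 0 := by
  have hunn : ∀ z ∈ K, 0 ≤ u z := by
    intro z hz
    by_cases h : z = 0
    · simp [h]
    · exact (hu z hz h).le
  intro j k hjk
  apply LinearMap.ext_on hKspan
  intro x hx
  simp only [LinearMap.comp_apply, LinearMap.zero_apply]
  set y := P j x with hy
  have hyK : y ∈ K := hpos j x hx
  have hPjy : P j y = y := by
    have := congrArg (fun f => f x) (hproj j)
    simpa [LinearMap.comp_apply] using this
  have hsum : ∑ i, u (P i y) = u y := hop y
  have hterm : ∀ i ∈ Finset.univ \ {j}, u (P i y) = 0 := by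
    have hsplit : u (P j y) + ∑ i ∈ Finset.univ \ {j}, u (P i y) = u y := by
      rw [← hsum, Finset.sum_eq_add_sum_sdiff_singleton_of_mem (Finset.mem_univ j) (fun i => u (P i y))]
    have h0 : ∑ i ∈ Finset.univ \ {j}, u (P i y) = 0 := by
      have : u (P j y) = u y := by rw [hPjy]
      linarith
    intro i hi
    have hnn : ∀ i ∈ Finset.univ \ {j}, 0 ≤ u (P i y) :=
      fun i _ => hunn _ (hpos i y hyK)
    exact (Finset.sum_eq_zero_iff_of_nonneg hnn).mp h0 i hi
  have hk : u (P k y) = 0 := hterm k (by simp [hjk.symm])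
  by_contra hne
  exact absurd hk (ne_of_gt (hu _ (hpos k y hyK) hne))
end

section
/- In the GPT-framework with a self-dualizing inner product where maximal frames are orthonormal and sum to the order unit: the spectral collision (order-2 Rényi) entropy is minimal among all convex decompositions into pure states. Concretely, if w = ∑_j p_j w_j is a classical decomposition (orthonormal pure states, probability coefficients) and w = ∑_j q_j v_j is any convex decomposition into pure states (unit vectors with pairwise nonnegative inner products), then ∑_j q_j² ≤ ∑_j p_j², hence H₂(q) = −log ∑ q_j² ≥ −log ∑ p_j² = H₂(p). -/
open scoped RealInnerProductSpace

/-- Classical decompositions minimize the collision (order-2 Rényi) entropy: if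
`w = ∑ p_j w_j` for an orthonormal family and `w = ∑ q_j v_j` is any convex decomposition
into unit vectors with pairwise nonnegative inner products, then `∑ q_j² ≤ ∑ p_j²`, and
hence `H₂(q) = −log ∑ q_j² ≥ −log ∑ p_j² = H₂(p)`. -/
theorem collision_entropy_minimal {A : Type*} [NormedAddCommGroup A]
    [InnerProductSpace ℝ A] [FiniteDimensional ℝ A]
    {n m : ℕ} (w : A) (wf : Fin n → A) (v : Fin m → A)
    (hwf : Orthonormal ℝ wf)
    (p : Fin n → ℝ) (hp : ∀ j, 0 ≤ p j) (hps : ∑ j, p j = 1)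
    (hw : w = ∑ j, p j • wf j)
    (hv : ∀ j, ‖v j‖ = 1) (hvnn : ∀ j k, 0 ≤ ⟪v j, v k⟫)
    (q : Fin m → ℝ) (hq : ∀ j, 0 ≤ q j) (hqs : ∑ j, q j = 1)
    (hwq : w = ∑ j, q j • v j) :
    (∑ j, (q j) ^ 2 ≤ ∑ j, (p j) ^ 2) ∧
    (-Real.log (∑ j, (p j) ^ 2) ≤ -Real.log (∑ j, (q j) ^ 2)) := by
  have hpw : ⟪w, w⟫ = ∑ j, (p j) ^ 2 := by
    rw [hw, inner_sum]
    congr 1; ext j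
    rw [sum_inner]
    rw [Finset.sum_eq_single j]
    · rw [real_inner_smul_left, real_inner_smul_right, real_inner_self_eq_norm_sq, hwf.1 j]
      ring
    · intro k _ hk
      rw [real_inner_smul_left, real_inner_smul_right, hwf.2 hk]
      ring
    · simp
  have hqw : ∑ j, (q j) ^ 2 ≤ ⟪w, w⟫ := by
    rw [hwq, inner_sum]
    have : ∀ j, (q j) ^ 2 ≤ ⟪∑ k, q k • v k, q j • v j⟫ := by
      intro j
      rw [sum_inner, Finset.sum_eq_add_sum_sdiff_singleton_of_mem (Finset.mem_univ j)]
      have h1 : ⟪q j • v j, q j • v j⟫ = (q j) ^ 2 := by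
        rw [real_inner_smul_left, real_inner_smul_right, real_inner_self_eq_norm_sq, hv j]
        ring
      have h2 : 0 ≤ ∑ k ∈ Finset.univ \ {j}, ⟪q k • v k, q j • v j⟫ := by
        apply Finset.sum_nonneg
        intro k _
        rw [real_inner_smul_left, real_inner_smul_right]
        exact mul_nonneg (hq k) (mul_nonneg (hq j) (hvnn k j))
      linarith
    exact Finset.sum_le_sum fun j _ => this j
  have h1 : ∑ j, (q j) ^ 2 ≤ ∑ j, (p j) ^ 2 := hpw ▸ hqw
  refine ⟨h1, ?_⟩
  have hqpos : 0 < ∑ j, (q j) ^ 2 := by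
    by_contra h
    push_neg at h
    have : ∑ j, (q j) ^ 2 = 0 :=
      le_antisymm h (Finset.sum_nonneg fun j _ => sq_nonneg _)
    have hall : ∀ j ∈ Finset.univ, (q j) ^ 2 = 0 :=
      (Finset.sum_eq_zero_iff_of_nonneg fun j _ => sq_nonneg _).mp this
    have : ∑ j, q j = 0 := Finset.sum_eq_zero fun j _ => by
      have := hall j (Finset.mem_univ j); nlinarith [hq j]
    linarith [hqs]
  have := Real.log_le_log hqpos h1
  linarith
end

section
/- For the 2D egg-shaped state space (boundary consisting of the half-circle {(r cos α, r sin α) : α ∈ [−π/2, π/2]} and the half-ellipse {(−R cos β, r sin β) : β ∈ [−π/2, π/2]}, with r, R > 0), every point of the convex region bounded by this curve lies on some chord connecting two boundary points at which the tangent lines are parallel; i.e., for every interior point w there exist an angle α and p ∈ [0,1] with w = p(r cos α, r sin α) + (1−p)(−R cos β(α), r sin β(α)), where β(α) = arccot(−(R/r)cot α). -/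
/-!
For `α ∈ [-π/2, π/2]`, write `u = (cos α, sin α)`. The circle point `c(α) = r u` and the ellipse
point `a(α) = (-R cos β(α), r sin β(α)) = -(R² cos α, r² sin α) / D(α)`, where
`D(α) = √(R² cos² α + r² sin² α)`, both have tangents orthogonal to `u`, and the egg lies in the
slab `-D(α) ≤ ⟪u, ·⟫ ≤ r` between these tangents. For a point `w` of the egg, the signed area
spanned by `c(α) - w` and `a(α) - w` is continuous in `α` and takes opposite values at `±π/2`, where
the chord is the vertical diameter; so for some `α` the point `w` is on the line through `c(α)`
and `a(α)`, and being in the slab it lies on the chord.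
-/

open Real

/-- The angle `β(α) = arccot(−(R/r) cot α)` (with the conventions `β(0) = 0`,
`β(±π/2) = ∓π/2`) selecting the boundary point with tangent parallel to the tangent at
angle `α`; for `α ∈ (−π/2, π/2)` it equals `arctan(−(r/R) tan α)`. -/
noncomputable def betaFun (r R α : ℝ) : ℝ :=
  if α = π / 2 then -(π / 2)
  else if α = -(π / 2) then π / 2
  else arctan (-(r / R) * tan α)

/-- The boundary curve of the 2D egg: a right half-circle of radius `r` and a left
half-ellipse with semi-axes `R` and `r`. -/
def eggCurve (r R : ℝ) : Set (ℝ × ℝ) :=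
  ((fun α => ((r * cos α, r * sin α) : ℝ × ℝ)) '' Set.Icc (-(π / 2)) (π / 2)) ∪
  ((fun β => ((-R * cos β, r * sin β) : ℝ × ℝ)) '' Set.Icc (-(π / 2)) (π / 2))

open Set

def cross (u v : ℝ × ℝ) : ℝ := u.1 * v.2 - u.2 * v.1

theorem exists_eq_smul_add_one_sub_smul_of_cross_eq_zero (ℓ : ℝ × ℝ →ₗ[ℝ] ℝ) {a c w : ℝ × ℝ}
    (hcross : cross (c - w) (a - w) = 0) (hac : ℓ a < ℓ c) (hw : ℓ w ∈ Icc (ℓ a) (ℓ c)) :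
    ∃ p ∈ Icc (0 : ℝ) 1, w = p • c + (1 - p) • a := by
  obtain ⟨A, B, hℓ⟩ : ∃ A B : ℝ, ∀ v : ℝ × ℝ, ℓ v = A * v.1 + B * v.2 := by
    refine ⟨ℓ (1, 0), ℓ (0, 1), fun v => ?_⟩
    calc ℓ v = ℓ (v.1 • (1, 0) + v.2 • (0, 1)) := by congr 1; ext <;> simp
      _ = _ := by rw [map_add, map_smul, map_smul, smul_eq_mul, smul_eq_mul]; ring
  simp only [hℓ, cross, Prod.fst_sub, Prod.snd_sub] at hcross hac hw ⊢
  have hpos : 0 < A * c.1 + B * c.2 - (A * a.1 + B * a.2) := sub_pos.2 hac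
  refine ⟨_, ⟨div_nonneg (sub_nonneg.2 hw.1) hpos.le, (div_le_one hpos).2 (by linarith [hw.2])⟩, ?_⟩
  ext <;> simp only [Prod.fst_add, Prod.snd_add, Prod.smul_fst, Prod.smul_snd, smul_eq_mul] <;>
    field_simp
  · linear_combination B * hcross
  · linear_combination -A * hcross

theorem exists_mem_Icc_eq_zero_of_map_eq_neg {f : ℝ → ℝ} {a b : ℝ} (hab : a ≤ b)
    (hf : ContinuousOn f (Icc a b)) (hfab : f a = -f b) : ∃ c ∈ Icc a b, f c = 0 := by
  rcases le_total 0 (f b) with h | h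
  · exact intermediate_value_Icc hab hf ⟨by linarith, h⟩
  · exact intermediate_value_Icc' hab hf ⟨h, by linarith⟩

-- For `α ∈ [-π/2, π/2]`, the support function of the egg in the direction `-(cos α, sin α)`,
-- attained at `eggOppositePoint r R α` on the half-ellipse.
noncomputable def ellipseSupport (r R α : ℝ) : ℝ := √(R ^ 2 * cos α ^ 2 + r ^ 2 * sin α ^ 2)

section ellipseSupport

variable {r R : ℝ}

theorem ellipseSupport_sq (r R α : ℝ) :
    ellipseSupport r R α ^ 2 = R ^ 2 * cos α ^ 2 + r ^ 2 * sin α ^ 2 :=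
  sq_sqrt (by positivity)

theorem ellipseSupport_pos (hr : r ≠ 0) (hR : R ≠ 0) (α : ℝ) : 0 < ellipseSupport r R α := by
  refine sqrt_pos.2 ?_
  rcases eq_or_ne (cos α) 0 with hc | hc
  · have hs : sin α ≠ 0 := fun hs => by simpa [hc, hs] using sin_sq_add_cos_sq α
    positivity
  · positivity

@[fun_prop]
theorem continuous_ellipseSupport (r R : ℝ) : Continuous (ellipseSupport r R) := by
  unfold ellipseSupport; fun_prop

theorem ellipseSupport_neg (r R α : ℝ) : ellipseSupport r R (-α) = ellipseSupport r R α := by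
  simp [ellipseSupport]

theorem ellipseSupport_pi_div_two (hr : 0 ≤ r) : ellipseSupport r R (π / 2) = r := by
  simp [ellipseSupport, sqrt_sq hr]

end ellipseSupport

noncomputable def eggOppositePoint (r R α : ℝ) : ℝ × ℝ :=
  (-(R ^ 2 * cos α) / ellipseSupport r R α, -(r ^ 2 * sin α) / ellipseSupport r R α)

section eggOppositePoint

variable {r R : ℝ}

theorem eggOppositePoint_pi_div_two (hr : 0 < r) : eggOppositePoint r R (π / 2) = (0, -r) := by
  simp [eggOppositePoint, ellipseSupport_pi_div_two hr.le]
  field_simp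

theorem eggOppositePoint_neg_pi_div_two (hr : 0 < r) :
    eggOppositePoint r R (-(π / 2)) = (0, r) := by
  simp [eggOppositePoint, ellipseSupport_neg, ellipseSupport_pi_div_two hr.le]
  field_simp

end eggOppositePoint

section betaFun
variable {r R α : ℝ}

theorem ellipsePoint_betaFun (hr : 0 < r) (hR : 0 < R) (hα : α ∈ Icc (-(π / 2)) (π / 2)) :
    ((-R * cos (betaFun r R α), r * sin (betaFun r R α)) : ℝ × ℝ) = eggOppositePoint r R α := by
  rcases eq_or_ne α (π / 2) with rfl | h₁
  · simp [betaFun, eggOppositePoint_pi_div_two hr]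
  rcases eq_or_ne α (-(π / 2)) with rfl | h₂
  · simp [betaFun, h₁, eggOppositePoint_neg_pi_div_two hr]
  have hc : 0 < cos α := cos_pos_of_mem_Ioo ⟨hα.1.lt_of_ne' h₂, hα.2.lt_of_ne h₁⟩
  have hD := ellipseSupport_pos hr.ne' hR.ne' α
  have hsqrt : √(1 + (-(r / R) * tan α) ^ 2) = ellipseSupport r R α / (R * cos α) := by
    rw [ellipseSupport, ← sqrt_sq (by positivity : 0 ≤ R * cos α), ← sqrt_div' _ (by positivity),
      tan_eq_sin_div_cos]
    congr 1
    field_simp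
  rw [betaFun, if_neg h₁, if_neg h₂, cos_arctan, sin_arctan, hsqrt,
    eggOppositePoint, tan_eq_sin_div_cos]
  ext <;> field_simp

end betaFun

noncomputable def dirFunctional (α : ℝ) : ℝ × ℝ →ₗ[ℝ] ℝ :=
  cos α • LinearMap.fst ℝ ℝ ℝ + sin α • LinearMap.snd ℝ ℝ ℝ

@[simp]
theorem dirFunctional_apply (α : ℝ) (v : ℝ × ℝ) :
    dirFunctional α v = cos α * v.1 + sin α * v.2 :=
  rfl

section slab
variable {r R α : ℝ}

theorem dirFunctional_circlePoint (r α : ℝ) :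
    dirFunctional α (r * cos α, r * sin α) = r := by
  rw [dirFunctional_apply]
  linear_combination r * sin_sq_add_cos_sq α

theorem dirFunctional_eggOppositePoint (hr : r ≠ 0) (hR : R ≠ 0) (α : ℝ) :
    dirFunctional α (eggOppositePoint r R α) = -ellipseSupport r R α := by
  have hD := ellipseSupport_pos hr hR α
  simp only [dirFunctional_apply, eggOppositePoint]
  field_simp
  linear_combination ellipseSupport_sq r R α

theorem eggCurve_subset_preimage_dirFunctional (hr : 0 < r) (hR : 0 < R)
    (hα : α ∈ Icc (-(π / 2)) (π / 2)) :
    eggCurve r R ⊆ dirFunctional α ⁻¹' Icc (-ellipseSupport r R α) r := by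
  have hcα : 0 ≤ cos α := cos_nonneg_of_mem_Icc hα
  have hD := ellipseSupport_pos hr.ne' hR.ne' α
  have hDsq := ellipseSupport_sq r R α
  rintro v (⟨t, ht, rfl⟩ | ⟨t, ht, rfl⟩) <;> have hct : 0 ≤ cos t := cos_nonneg_of_mem_Icc ht <;>
    simp only [mem_preimage, dirFunctional_apply, mem_Icc]
  · obtain ⟨hrs₁, hrs₂⟩ : -ellipseSupport r R α ≤ r * sin α ∧ r * sin α ≤ ellipseSupport r R α :=
      abs_le_of_sq_le_sq' (by nlinarith [sq_nonneg (R * cos α)]) hD.le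
    have hcos : cos α * (r * cos t) + sin α * (r * sin t) = r * cos (α - t) := by
      rw [cos_sub]; ring
    constructor
    · nlinarith [mul_nonneg (mul_nonneg hr.le hcα) hct, mul_nonneg (neg_le_iff_add_nonneg.1 hrs₁)
        (neg_le_iff_add_nonneg'.1 (neg_one_le_sin t)), mul_nonneg (sub_nonneg.2 hrs₂)
        (sub_nonneg.2 (sin_le_one t))]
    · rw [hcos]; nlinarith [cos_le_one (α - t)]
  · have hCS : (cos α * (-R * cos t) + sin α * (r * sin t)) ^ 2 ≤ ellipseSupport r R α ^ 2 := by
      nlinarith [sq_nonneg (R * cos α * sin t + r * sin α * cos t), sin_sq_add_cos_sq t]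
    refine ⟨(abs_le_of_sq_le_sq' hCS hD.le).1, ?_⟩
    have : sin α * sin t ≤ 1 := by
      nlinarith [sin_le_one α, neg_one_le_sin α, sin_le_one t, neg_one_le_sin t]
    nlinarith [mul_nonneg (mul_nonneg hR.le hcα) hct]

theorem convexHull_eggCurve_subset_preimage_dirFunctional (hr : 0 < r) (hR : 0 < R)
    (hα : α ∈ Icc (-(π / 2)) (π / 2)) :
    convexHull ℝ (eggCurve r R) ⊆ dirFunctional α ⁻¹' Icc (-ellipseSupport r R α) r :=
  convexHull_min (eggCurve_subset_preimage_dirFunctional hr hR hα)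
    ((convex_Icc _ _).linear_preimage _)

end slab

theorem exists_cross_circlePoint_eggOppositePoint_eq_zero {r R : ℝ} (hr : 0 < r) (hR : R ≠ 0)
    (w : ℝ × ℝ) : ∃ α ∈ Icc (-(π / 2)) (π / 2),
      cross ((r * cos α, r * sin α) - w) (eggOppositePoint r R α - w) = 0 := by
  refine exists_mem_Icc_eq_zero_of_map_eq_neg (by linarith [pi_pos]) (Continuous.continuousOn ?_) ?_
  · unfold cross eggOppositePoint
    fun_prop (disch := exact fun α => (ellipseSupport_pos hr.ne' hR α).ne')
  · simp only [cross, eggOppositePoint_pi_div_two hr, eggOppositePoint_neg_pi_div_two hr, cos_neg,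
      sin_neg, cos_pi_div_two, sin_pi_div_two]
    ring_nf

/-- Weak spectrality of the 2D egg state space: every point of the convex region bounded
by the egg curve lies on a chord connecting two boundary points with parallel tangents. -/
theorem egg_weak_spectrality {r R : ℝ} (hr : 0 < r) (hR : 0 < R) :
    ∀ w ∈ convexHull ℝ (eggCurve r R),
      ∃ α ∈ Set.Icc (-(π / 2)) (π / 2), ∃ p ∈ Set.Icc (0 : ℝ) 1,
        w = p • ((r * cos α, r * sin α) : ℝ × ℝ) +
            (1 - p) • ((-R * cos (betaFun r R α), r * sin (betaFun r R α)) : ℝ × ℝ) := by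
  intro w hw
  obtain ⟨α, hα, hcross⟩ := exists_cross_circlePoint_eggOppositePoint_eq_zero hr hR.ne' w
  have hD := ellipseSupport_pos hr.ne' hR.ne' α
  have hcirc := dirFunctional_circlePoint r α
  have hopp := dirFunctional_eggOppositePoint hr.ne' hR.ne' α
  obtain ⟨p, hp, hw⟩ := exists_eq_smul_add_one_sub_smul_of_cross_eq_zero _ hcross
    (by rw [hcirc, hopp]; linarith)
    (by rw [hcirc, hopp]; exact convexHull_eggCurve_subset_preimage_dirFunctional hr hR hα hw)
  exact ⟨α, hα, p, hp, by rwa [ellipsePoint_betaFun hr hR hα]⟩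
end
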